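/- arXiv:1110.0333 — 2 statements merged into one kernel-verified Lean document; each statement's English description precedes it below -/
import Mathlib

section
/- Let M, N be positive integers. The following are equivalent: (i) there exists a Stieltjes moment sequence {a_n}_{n=0}^∞ with representing measure μ satisfying supp μ ⊆ (0,∞) and card(supp μ) = M, such that {√(a_n)}_{n=0}^∞ is a Stieltjes moment sequence with a representing measure ν satisfying supp ν ⊆ (0,∞) and card(supp ν) = N; (ii) 2N − 1 ≤ M ≤ N(N+1)/2; (iii) ⌈(√(8M+1) − 1)/2⌉ ≤ N ≤ ⌊(M+1)/2⌋. -/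
open MeasureTheory

/-- The closed support of a Borel measure: the set of points all of whose open
neighbourhoods have positive measure. -/
def msupport {X : Type*} [TopologicalSpace X] [MeasurableSpace X] (μ : Measure X) : Set X :=
  {x | ∀ U : Set X, IsOpen U → x ∈ U → 0 < μ U}

/-- `μ` is a representing measure (on `[0,∞)`, modelled as a measure on `ℝ` vanishing on
`(-∞,0)`) of the Stieltjes moment sequence `a`. -/
def IsRepMeas (a : ℕ → ℝ) (μ : Measure ℝ) : Prop :=
  (∀ n, 0 ≤ a n) ∧ μ (Set.Iio 0) = 0 ∧
    ∀ n : ℕ, ∫⁻ x, ENNReal.ofReal (x ^ n) ∂μ = ENNReal.ofReal (a n)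

/-- `a` is a Stieltjes moment sequence. -/
def IsStieltjes (a : ℕ → ℝ) : Prop :=
  ∃ μ : Measure ℝ, IsRepMeas a μ

/-- A Stieltjes moment sequence is determinate if it has a unique representing measure. -/
def IsDeterminate (a : ℕ → ℝ) : Prop :=
  ∀ μ ν : Measure ℝ, IsRepMeas a μ → IsRepMeas a ν → μ = ν

open Finset
open scoped Pointwise ENNReal Topology

/-!
If `ν` has finite support `T` and weights `v`, then
`a n = (∑ y ∈ T, v y * y ^ n) ^ 2 = ∑ (y, y') ∈ T × T, v y * v y' * (y * y') ^ n`.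
A finite combination of the sequences `n ↦ x ^ n` with positive coefficients determines the set
of its bases (Vandermonde), so `supp μ = T * T`. Hence `M = #(T * T)` with `N = #T`:
`M ≤ N (N + 1) / 2` because a product only depends on an unordered pair, and `2 N - 1 ≤ M` is
Cauchy–Davenport for the additive set `log T`.

Conversely every `M` in that range is `#(S + S)` for some `S ⊆ ℕ` with `#S = N`: for `M ≤ 3 (N - 1)`
take `{0, …, N - 2}` plus one point, otherwise add a point beyond twice the maximum of a set with
`N - 1` elements, which contributes `N` new sums. Then `T = 2 ^ S`, `ν = ∑ δ_t`, `μ = ∑ δ_{t t'}`.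
Condition (iii) is (ii) solved for `N`.
-/

namespace Finset

variable {α β : Type*} [DecidableEq α]

theorem card_mul_self_le [CommMagma α] (s : Finset α) : #(s * s) ≤ #s * (#s + 1) / 2 :=
  calc #(s * s) ≤ #(s.sym2.image (Sym2.lift ⟨(· * ·), mul_comm⟩)) := by
        refine card_le_card fun z hz => ?_
        obtain ⟨a, ha, b, hb, rfl⟩ := mem_mul.1 hz
        exact mem_image_of_mem _ (mk_mem_sym2_iff.2 ⟨ha, hb⟩)
    _ ≤ #s.sym2 := card_image_le
    _ = #s * (#s + 1) / 2 := by rw [card_sym2, Nat.choose_two_right, Nat.add_sub_cancel, mul_comm]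

theorem image_add_of_map_add [DecidableEq β] [Add α] [Mul β] {f : α → β}
    (hf : ∀ a b, f (a + b) = f a * f b) (s t : Finset α) :
    (s + t).image f = s.image f * t.image f :=
  image_image₂_distrib hf

theorem two_mul_card_sub_one_le_card_mul_self {T : Finset ℝ} (hT : ∀ t ∈ T, 0 < t) :
    2 * #T - 1 ≤ #(T * T) := by
  rcases T.eq_empty_or_nonempty with rfl | hne
  · simp
  have hT' : (T.image Real.log).image Real.exp = T := by
    rw [image_image]
    exact (image_congr fun t ht => Real.exp_log (hT t ht)).trans image_id
  rw [← hT', ← image_add_of_map_add Real.exp_add, card_image_of_injective _ Real.exp_injective,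
    card_image_of_injective _ Real.exp_injective, two_mul]
  exact cauchy_davenport_add_of_linearOrder_isCancelAdd (hne.image _) (hne.image _)

theorem insert_add_insert_self [AddCommSemigroup α] (b : α) (S : Finset α) :
    insert b S + insert b S = insert (b + b) (S.image (b + ·) ∪ (S + S)) := by
  ext z
  simp only [mem_add, mem_insert, mem_union, mem_image]
  constructor
  · rintro ⟨x, rfl | hx, y, rfl | hy, rfl⟩
    · exact .inl rfl
    · exact .inr (.inl ⟨y, hy, rfl⟩)
    · exact .inr (.inl ⟨x, hx, add_comm _ _⟩)
    · exact .inr (.inr ⟨x, hx, y, hy, rfl⟩)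
  · rintro (rfl | ⟨y, hy, rfl⟩ | ⟨x, hx, y, hy, rfl⟩)
    · exact ⟨b, .inl rfl, b, .inl rfl, rfl⟩
    · exact ⟨b, .inl rfl, y, .inr hy, rfl⟩
    · exact ⟨x, .inr hx, y, .inr hy, rfl⟩

theorem card_insert_add_insert_self_of_two_mul_lt {S : Finset ℕ} {b : ℕ}
    (hb : ∀ s ∈ S, 2 * s < b) : #(insert b S + insert b S) = #(S + S) + #S + 1 := by
  have hsum : ∀ z ∈ S + S, z < b := by
    intro z hz
    obtain ⟨x, hx, y, hy, rfl⟩ := mem_add.1 hz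
    have := hb x hx; have := hb y hy; omega
  rw [insert_add_insert_self, card_insert_of_notMem, card_union_of_disjoint,
    card_image_of_injective _ (add_right_injective b)]
  · omega
  · refine disjoint_left.2 fun z hz hz' => ?_
    obtain ⟨s, -, rfl⟩ := mem_image.1 hz
    have := hsum _ hz'; omega
  · simp only [mem_union, mem_image, not_or, not_exists, not_and]
    refine ⟨fun s hs h => ?_, fun h => ?_⟩
    · have := hb s hs; omega
    · have := hsum _ h; omega

theorem card_insert_add_insert_range {N b : ℕ} (hN : N ≤ b) (hb : b < 2 * N) :
    #(insert b (range N) + insert b (range N)) = b + N + 1 := by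
  have hunion : (range N).image (b + ·) ∪ (range N + range N) = range (b + N) := by
    ext z
    simp only [mem_union, mem_image, mem_range, mem_add]
    constructor
    · rintro (⟨y, hy, rfl⟩ | ⟨x, hx, y, hy, rfl⟩) <;> omega
    · intro hz
      by_cases h : b ≤ z
      · exact .inl ⟨z - b, by omega, by omega⟩
      · exact .inr ⟨min z (N - 1), by omega, z - min z (N - 1), by omega, by omega⟩
  rw [insert_add_insert_self, hunion, card_insert_of_notMem (by simp; omega), card_range]

theorem exists_finset_card_add_self_eq {N M : ℕ} (hN : 1 ≤ N) (hM : 2 * N - 1 ≤ M)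
    (hM' : M ≤ N * (N + 1) / 2) : ∃ S : Finset ℕ, #S = N ∧ #(S + S) = M := by
  induction N, hN using Nat.le_induction generalizing M with
  | base => exact ⟨{0}, rfl, by rw [singleton_add_singleton, card_singleton]; omega⟩
  | succ N hN ih =>
    rcases le_or_gt M (3 * N) with h | h
    · refine ⟨insert (M - N - 1) (range N), ?_, ?_⟩
      · rw [card_insert_of_notMem (by simp; omega), card_range]
      · rw [card_insert_add_insert_range] <;> omega
    · have htri : (N + 1) * (N + 1 + 1) = N * (N + 1) + 2 * (N + 1) := by ring
      obtain ⟨S, hSN, hSM⟩ := ih (M := M - (N + 1)) (by omega) (by omega)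
      have hb : ∀ s ∈ S, 2 * s < 2 * S.sup id + 1 := fun s hs => by
        have := le_sup (f := id) hs; simp only [id] at this; omega
      refine ⟨insert (2 * S.sup id + 1) S, ?_, ?_⟩
      · rw [card_insert_of_notMem fun h => by have := hb _ h; omega, hSN]
      · rw [card_insert_add_insert_self_of_two_mul_lt hb, hSM, hSN]; omega

theorem exists_pos_finset_card_mul_self_eq {N M : ℕ} (hN : 1 ≤ N) (hM : 2 * N - 1 ≤ M)
    (hM' : M ≤ N * (N + 1) / 2) : ∃ T : Finset ℝ, (∀ t ∈ T, 0 < t) ∧ #T = N ∧ #(T * T) = M := by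
  obtain ⟨S, hSN, hSM⟩ := exists_finset_card_add_self_eq hN hM hM'
  have hinj : Function.Injective fun n : ℕ => (2 : ℝ) ^ n :=
    pow_right_injective₀ two_pos (by norm_num)
  refine ⟨S.image (2 ^ ·), by simp, by rw [card_image_of_injective _ hinj, hSN], ?_⟩
  rw [← image_add_of_map_add (pow_add 2), card_image_of_injective _ hinj, hSM]

end Finset

section ExponentialSums

variable {R : Type*} [CommRing R]

theorem eq_zero_of_forall_sum_mul_pow_eq_zero [IsDomain R] {C : Finset R} {c : R → R}
    (h : ∀ n : ℕ, ∑ x ∈ C, c x * x ^ n = 0) {x : R} (hx : x ∈ C) : c x = 0 := by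
  let e := C.equivFin
  have hv := Matrix.eq_zero_of_forall_pow_sum_mul_pow_eq_zero (f := fun i => (e.symm i : R))
    (v := fun i => c (e.symm i)) (Subtype.val_injective.comp e.symm.injective) fun i => by
      rw [e.symm.sum_comp (fun y : C => c y * (y : R) ^ (i : ℕ)),
        C.sum_coe_sort (fun y => c y * y ^ (i : ℕ))]
      exact h i
  simpa using congrFun hv (e ⟨x, hx⟩)

theorem eq_of_forall_sum_mul_pow_eq [IsDomain R] {A B : Finset R} {α β : R → R}
    (hα : ∀ x ∈ A, α x ≠ 0) (hβ : ∀ x ∈ B, β x ≠ 0)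
    (h : ∀ n : ℕ, ∑ x ∈ A, α x * x ^ n = ∑ x ∈ B, β x * x ^ n) : A = B := by
  classical
  set c : R → R := fun x => (if x ∈ A then α x else 0) - if x ∈ B then β x else 0
  have hc : ∀ n : ℕ, ∑ x ∈ A ∪ B, c x * x ^ n = 0 := fun n => by
    simp only [c, sub_mul, ite_mul, zero_mul, sum_sub_distrib, sum_ite_mem,
      union_inter_cancel_left, union_inter_cancel_right, h n, sub_self]
  ext x
  constructor <;> intro hx <;> by_contra hx'
  · have h0 := eq_zero_of_forall_sum_mul_pow_eq_zero hc (mem_union_left B hx)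
    simp only [c, if_pos hx, if_neg hx', sub_zero] at h0
    exact hα x hx h0
  · have h0 := eq_zero_of_forall_sum_mul_pow_eq_zero hc (mem_union_right A hx)
    simp only [c, if_pos hx, if_neg hx', zero_sub, neg_eq_zero] at h0
    exact hβ x hx h0

theorem sum_mul_pow_eq_sum_image [DecidableEq R] {ι : Type*} (I : Finset ι) (f α : ι → R)
    (n : ℕ) : ∑ i ∈ I, α i * f i ^ n = ∑ x ∈ I.image f, (∑ i ∈ I with f i = x, α i) * x ^ n := by
  rw [← sum_fiberwise_of_maps_to fun i hi => mem_image_of_mem f hi]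
  refine sum_congr rfl fun x _ => ?_
  rw [sum_mul]
  exact sum_congr rfl fun i hi => by rw [(mem_filter.1 hi).2]

theorem image_eq_of_forall_sum_mul_pow_eq [LinearOrder R] [IsStrictOrderedRing R]
    {ι κ : Type*} {I : Finset ι} {J : Finset κ} {f α : ι → R} {g β : κ → R}
    (hα : ∀ i ∈ I, 0 < α i) (hβ : ∀ j ∈ J, 0 < β j)
    (h : ∀ n : ℕ, ∑ i ∈ I, α i * f i ^ n = ∑ j ∈ J, β j * g j ^ n) : I.image f = J.image g := by
  classical
  refine eq_of_forall_sum_mul_pow_eq ?_ ?_ fun n => by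
    rw [← sum_mul_pow_eq_sum_image, ← sum_mul_pow_eq_sum_image, h]
  · intro x hx
    obtain ⟨i, hi, rfl⟩ := mem_image.1 hx
    refine (sum_pos (fun k hk => hα k (mem_filter.1 hk).1) ?_).ne'
    exact ⟨i, mem_filter.2 ⟨hi, rfl⟩⟩
  · intro x hx
    obtain ⟨j, hj, rfl⟩ := mem_image.1 hx
    refine (sum_pos (fun k hk => hβ k (mem_filter.1 hk).1) ?_).ne'
    exact ⟨j, mem_filter.2 ⟨hj, rfl⟩⟩

theorem sq_sum_mul_pow (T : Finset R) (v : R → R) (n : ℕ) :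
    (∑ y ∈ T, v y * y ^ n) ^ 2 = ∑ p ∈ T ×ˢ T, v p.1 * v p.2 * (p.1 * p.2) ^ n := by
  rw [sq, sum_mul_sum, sum_product]
  exact sum_congr rfl fun _ _ => sum_congr rfl fun _ _ => by ring

end ExponentialSums

section Support

variable {X : Type*} [TopologicalSpace X] [MeasurableSpace X]

theorem msupport_eq_support (μ : Measure X) : msupport μ = μ.support := by
  ext x
  simp only [msupport, Measure.support_eq_forall_isOpen, Set.mem_ofPred_eq]
  exact forall_congr' fun _ => imp.swap

theorem MeasureTheory.Measure.support_dirac [T1Space X] [OpensMeasurableSpace X] (x : X) :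
    (Measure.dirac x).support = {x} := by
  ext y
  rw [Measure.mem_support_iff_forall, Set.mem_singleton_iff]
  constructor
  · intro hy
    by_contra hne
    have := hy _ (isOpen_compl_singleton.mem_nhds hne)
    simp [Measure.dirac_apply' _ isClosed_singleton.measurableSet.compl] at this
  · rintro rfl U hU
    rw [Measure.dirac_apply_of_mem (mem_of_mem_nhds hU)]
    exact one_pos

theorem MeasureTheory.Measure.support_finset_sum {ι : Type*} (s : Finset ι) (μ : ι → Measure X) :
    (∑ i ∈ s, μ i).support = ⋃ i ∈ s, (μ i).support := by
  classical
  induction s using Finset.induction_on with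
  | empty => simp
  | insert i s hi ih => rw [sum_insert hi, Measure.support_add, ih, set_biUnion_insert]

theorem MeasureTheory.Measure.support_finset_sum_dirac [T1Space X] [OpensMeasurableSpace X]
    [DecidableEq X] {ι : Type*} (s : Finset ι) (f : ι → X) :
    (∑ i ∈ s, Measure.dirac (f i)).support = ↑(s.image f) := by
  ext
  simp [Measure.support_finset_sum, Measure.support_dirac, eq_comm]

variable [HereditarilyLindelofSpace X] {μ : Measure X} {S : Finset X}

theorem MeasureTheory.Measure.lintegral_eq_sum_of_support_eq [MeasurableSingletonClass X]
    (hS : μ.support = S) (g : X → ℝ≥0∞) : ∫⁻ x, g x ∂μ = ∑ x ∈ S, g x * μ {x} := by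
  rw [← lintegral_finset, Measure.restrict_eq_self_of_ae_mem (hS ▸ Measure.support_mem_ae)]

theorem MeasureTheory.Measure.measure_singleton_pos_of_support_eq [T1Space X]
    (hS : μ.support = S) {x : X} (hx : x ∈ S) : 0 < μ {x} := by
  classical
  have hU : (↑(S.erase x) : Set X)ᶜ ∈ 𝓝 x :=
    (S.erase x).finite_toSet.isClosed.isOpen_compl.mem_nhds (by simp)
  refine ((Measure.mem_support_iff_forall x).1 (hS ▸ hx) _ hU).trans_le (measure_mono_ae ?_)
  filter_upwards [Measure.support_mem_ae (μ := μ)] with y hy hyU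
  rw [hS] at hy
  exact Set.mem_singleton_iff.2 (by_contra fun hne => hyU (mem_erase.2 ⟨hne, hy⟩))

end Support

namespace IsRepMeas

variable {a : ℕ → ℝ} {μ : Measure ℝ}

theorem isFiniteMeasure (h : IsRepMeas a μ) : IsFiniteMeasure μ :=
  ⟨by simpa using (h.2.2 0).trans_lt ENNReal.ofReal_lt_top⟩

theorem support_subset_Ici (h : IsRepMeas a μ) : μ.support ⊆ Set.Ici 0 := fun _ hx =>
  Set.mem_Ici.2 <| not_lt.1 fun hneg =>
    Measure.subset_compl_support_of_isOpen isOpen_Iio h.2.1 hneg hx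

theorem eq_sum_atoms (h : IsRepMeas a μ) {S : Finset ℝ} (hS : μ.support = S) (n : ℕ) :
    a n = ∑ x ∈ S, (μ {x}).toReal * x ^ n := by
  have := h.isFiniteMeasure
  have hmom := h.2.2 n
  rw [Measure.lintegral_eq_sum_of_support_eq hS] at hmom
  rw [← ENNReal.toReal_ofReal (h.1 n), ← hmom,
    ENNReal.toReal_sum fun x _ => ENNReal.mul_ne_top ENNReal.ofReal_ne_top (measure_ne_top μ _)]
  refine sum_congr rfl fun x hx => ?_
  have hx0 : 0 ≤ x := h.support_subset_Ici (hS ▸ hx : x ∈ μ.support)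
  rw [ENNReal.toReal_mul, ENNReal.toReal_ofReal (pow_nonneg hx0 n), mul_comm]

theorem atom_pos (h : IsRepMeas a μ) {S : Finset ℝ} (hS : μ.support = S) {x : ℝ} (hx : x ∈ S) :
    0 < (μ {x}).toReal :=
  have := h.isFiniteMeasure
  ENNReal.toReal_pos (Measure.measure_singleton_pos_of_support_eq hS hx).ne' (measure_ne_top μ _)

end IsRepMeas

theorem isRepMeas_finset_sum_dirac {ι : Type*} (s : Finset ι) (f : ι → ℝ)
    (hf : ∀ i ∈ s, 0 ≤ f i) :
    IsRepMeas (fun n => ∑ i ∈ s, f i ^ n) (∑ i ∈ s, Measure.dirac (f i)) := by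
  refine ⟨fun n => sum_nonneg fun i hi => pow_nonneg (hf i hi) n, ?_, fun n => ?_⟩
  · rw [Measure.finsetSum_apply]
    exact sum_eq_zero fun i hi => by
      simp [Measure.dirac_apply' _ measurableSet_Iio, (hf i hi).not_gt]
  · rw [lintegral_finsetSum_measure,
      ENNReal.ofReal_sum_of_nonneg fun i hi => pow_nonneg (hf i hi) n]
    simp_rw [lintegral_dirac]

theorem support_eq_mul_self_of_isRepMeas_sqrt {a : ℕ → ℝ} {μ ν : Measure ℝ}
    (hμ : IsRepMeas a μ) (hν : IsRepMeas (fun n => √(a n)) ν) {S T : Finset ℝ}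
    (hS : μ.support = S) (hT : ν.support = T) : S = T * T := by
  rw [mul_def, ← image_id (s := S)]
  refine image_eq_of_forall_sum_mul_pow_eq (fun x hx => hμ.atom_pos hS hx) (fun p hp => mul_pos
    (hν.atom_pos hT (mem_product.1 hp).1) (hν.atom_pos hT (mem_product.1 hp).2)) fun n => ?_
  rw [← sq_sum_mul_pow T fun y => (ν {y}).toReal, ← hν.eq_sum_atoms hT, Real.sq_sqrt (hμ.1 n)]
  exact (hμ.eq_sum_atoms hS n).symm

theorem exists_isRepMeas_sqrt_support_eq {T : Finset ℝ} (hT : ∀ t ∈ T, 0 ≤ t) :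
    ∃ (a : ℕ → ℝ) (μ ν : Measure ℝ), IsRepMeas a μ ∧ μ.support = ↑(T * T) ∧
      IsRepMeas (fun n => √(a n)) ν ∧ ν.support = ↑T := by
  have hμ := isRepMeas_finset_sum_dirac (T ×ˢ T) (fun p => p.1 * p.2) fun p hp =>
    mul_nonneg (hT _ (mem_product.1 hp).1) (hT _ (mem_product.1 hp).2)
  have hν := isRepMeas_finset_sum_dirac T id hT
  refine ⟨_, _, _, hμ, by rw [Measure.support_finset_sum_dirac, mul_def], ?_,
    by rw [Measure.support_finset_sum_dirac, image_id]⟩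
  convert hν using 2 with n
  have := sq_sum_mul_pow T 1 n
  simp only [Pi.one_apply, one_mul] at this
  rw [← this, Real.sqrt_sq (sum_nonneg fun t ht => pow_nonneg (hT t ht) n)]
  rfl

theorem le_div_two_iff_ceil_le (M N : ℕ) :
    M ≤ N * (N + 1) / 2 ↔ ⌈(√(8 * M + 1) - 1) / 2⌉ ≤ (N : ℤ) := by
  rw [Int.ceil_le, div_le_iff₀ two_pos, sub_le_iff_le_add, Real.sqrt_le_left (by positivity),
    Nat.le_div_iff_mul_le two_pos]
  have hsq : (((N : ℤ) : ℝ) * 2 + 1) ^ 2 = 4 * ((N * (N + 1) : ℕ) : ℝ) + 1 := by push_cast; ring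
  rw [hsq]
  constructor <;> intro h
  · exact_mod_cast (by omega : 8 * M + 1 ≤ 4 * (N * (N + 1)) + 1)
  · have : 8 * M + 1 ≤ 4 * (N * (N + 1)) + 1 := by exact_mod_cast h
    omega

theorem stmt17 (M N : ℕ) (hM : 1 ≤ M) (hN : 1 ≤ N) :
    ((∃ (a : ℕ → ℝ) (μ ν : Measure ℝ),
        IsRepMeas a μ ∧ msupport μ ⊆ Set.Ioi 0 ∧ (msupport μ).ncard = M ∧
        IsRepMeas (fun n => Real.sqrt (a n)) ν ∧ msupport ν ⊆ Set.Ioi 0 ∧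
        (msupport ν).ncard = N) ↔
      (2 * N - 1 ≤ M ∧ M ≤ N * (N + 1) / 2)) ∧
    ((2 * N - 1 ≤ M ∧ M ≤ N * (N + 1) / 2) ↔
      (⌈(Real.sqrt (8 * M + 1) - 1) / 2⌉ ≤ (N : ℤ) ∧ N ≤ (M + 1) / 2)) := by
  refine ⟨⟨?_, fun h => ?_⟩, ?_⟩
  · rintro ⟨a, μ, ν, hμ, -, hμM, hν, hνpos, hνN⟩
    simp only [msupport_eq_support] at hμM hνN hνpos
    -- `ncard` of an infinite set is `0`, so both supports are finite.
    obtain ⟨S, hS⟩ := (Set.finite_of_ncard_pos (hμM ▸ hM)).exists_finset_coe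
    obtain ⟨T, hT⟩ := (Set.finite_of_ncard_pos (hνN ▸ hN)).exists_finset_coe
    rw [← hS, Set.ncard_coe_finset] at hμM
    rw [← hT, Set.ncard_coe_finset] at hνN
    rw [← hT] at hνpos
    obtain rfl := support_eq_mul_self_of_isRepMeas_sqrt hμ hν hS.symm hT.symm
    subst hμM hνN
    exact ⟨two_mul_card_sub_one_le_card_mul_self hνpos, card_mul_self_le T⟩
  · obtain ⟨T, hTpos, rfl, rfl⟩ := exists_pos_finset_card_mul_self_eq hN h.1 h.2
    obtain ⟨a, μ, ν, hμ, hμT, hν, hνT⟩ :=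
      exists_isRepMeas_sqrt_support_eq fun t ht => (hTpos t ht).le
    refine ⟨a, μ, ν, hμ, ?_, ?_, hν, ?_, ?_⟩ <;>
      simp only [msupport_eq_support, hμT, hνT, Set.ncard_coe_finset]
    · intro z hz
      obtain ⟨x, hx, y, hy, rfl⟩ := mem_mul.1 hz
      exact mul_pos (hTpos x hx) (hTpos y hy)
    · exact hTpos
  · rw [le_div_two_iff_ceil_le, and_comm, Nat.le_div_iff_mul_le two_pos]
    omega
end

section
/- Let α1, α2, θ1, θ2 be positive real numbers. Then the sequence {√(α1·θ1^n + α2·θ2^n)}_{n=0}^∞ is a Stieltjes moment sequence if and only if θ1 = θ2. -/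
open MeasureTheory

/-!
If `μ` represents `a`, the Kronecker square of the Hankel matrix of `a` is the Gram matrix of the
monomials `xⁱ yʲ` in `L²(μ ⊗ μ)`, hence positive semidefinite. When
`a n ^ 2 = α₁ θ₁ ^ n + α₂ θ₂ ^ n`, the polynomial `P(z) = (z - θ₁)(z - θ₂)` has
`‖P(xy)‖² = Σₖ pₖ a(k)² = α₁ P(θ₁)² + α₂ P(θ₂)² = 0`, where `P² = Σₖ pₖ zᵏ`, so by Cauchy–Schwarz
`P(xy)` is orthogonal to `y`: `θ₁θ₂ a₀a₁ - (θ₁ + θ₂) a₁a₂ + a₂a₃ = 0`. Rationalizing the square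
roots turns this into `a₀a₂ = a₁²`, i.e. equality in `(α₁θ₁ + α₂θ₂)² ≤ (α₁ + α₂)(α₁θ₁² + α₂θ₂²)`,
which forces `θ₁ = θ₂`. Conversely, for `θ₁ = θ₂` the sequence is `√(α₁ + α₂) (√θ₁)ⁿ`, the moments
of a point mass.
-/

open Finset Matrix
open scoped Kronecker

def hankel (a : ℕ → ℝ) (n : ℕ) : Matrix (Fin n) (Fin n) ℝ :=
  Matrix.of fun i j => a (i + j)

namespace IsRepMeas

variable {a : ℕ → ℝ} {μ : Measure ℝ}

theorem ae_nonneg (h : IsRepMeas a μ) : ∀ᵐ x ∂μ, 0 ≤ x := by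
  rw [ae_iff]
  simpa [Set.Iio, not_le] using h.2.1

theorem integrable_pow (h : IsRepMeas a μ) (n : ℕ) : Integrable (fun x : ℝ => x ^ n) μ := by
  refine ⟨(measurable_id.pow_const n).aestronglyMeasurable, ?_⟩
  rw [hasFiniteIntegral_iff_ofReal (h.ae_nonneg.mono fun x hx => pow_nonneg hx n), h.2.2 n]
  exact ENNReal.ofReal_lt_top

theorem integral_pow (h : IsRepMeas a μ) (n : ℕ) : ∫ x, x ^ n ∂μ = a n := by
  rw [integral_eq_lintegral_of_nonneg_ae (h.ae_nonneg.mono fun x hx => pow_nonneg hx n)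
    (measurable_id.pow_const n).aestronglyMeasurable, h.2.2 n, ENNReal.toReal_ofReal (h.1 n)]

theorem posSemidef_hankel (h : IsRepMeas a μ) (n : ℕ) : (hankel a n).PosSemidef := by
  refine .of_dotProduct_mulVec_nonneg ?_ fun v => ?_
  · ext i j
    simp [hankel, add_comm]
  have hsq : ∀ x : ℝ, (∑ i, v i * x ^ (i : ℕ)) ^ 2 = ∑ i, ∑ j, v i * v j * x ^ ((i : ℕ) + j) :=
    fun x => by
      rw [sq, sum_mul_sum]
      exact sum_congr rfl fun i _ => sum_congr rfl fun j _ => by ring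
  have hint : ∀ i j : Fin n, Integrable (fun x : ℝ => v i * v j * x ^ ((i : ℕ) + j)) μ :=
    fun i j => (h.integrable_pow _).const_mul _
  have hform : star v ⬝ᵥ (hankel a n *ᵥ v) = ∫ x, (∑ i, v i * x ^ (i : ℕ)) ^ 2 ∂μ := by
    simp_rw [hsq]
    rw [integral_finsetSum _ fun i _ => integrable_finsetSum _ fun j _ => hint i j]
    simp only [dotProduct, mulVec, hankel, Matrix.of_apply, star_trivial, mul_sum]
    refine sum_congr rfl fun i _ => ?_
    rw [integral_finsetSum _ fun j _ => hint i j]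
    refine sum_congr rfl fun j _ => ?_
    rw [integral_const_mul, h.integral_pow]
    ring
  rw [hform]
  exact integral_nonneg fun x => sq_nonneg _

/-- Cauchy–Schwarz `⟪P(xy), y⟫² ≤ ‖y‖² ‖P(xy)‖²` in `L²(μ ⊗ μ)` for `P = c₀ + c₁ z + c₂ z²`. -/
theorem sq_cross_moment_le (h : IsRepMeas a μ) (c₀ c₁ c₂ : ℝ) :
    (c₀ * (a 0 * a 1) + c₁ * (a 1 * a 2) + c₂ * (a 2 * a 3)) ^ 2 ≤
      a 0 * a 2 * (c₀ ^ 2 * a 0 ^ 2 + 2 * c₀ * c₁ * a 1 ^ 2 + (2 * c₀ * c₂ + c₁ ^ 2) * a 2 ^ 2 +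
        2 * c₁ * c₂ * a 3 ^ 2 + c₂ ^ 2 * a 4 ^ 2) := by
  have hK := (h.posSemidef_hankel 3).kronecker (h.posSemidef_hankel 3)
  have hquad : ∀ l : ℝ, 0 ≤ a 0 * a 2 * (l * l) +
      2 * (c₀ * (a 0 * a 1) + c₁ * (a 1 * a 2) + c₂ * (a 2 * a 3)) * l +
      (c₀ ^ 2 * a 0 ^ 2 + 2 * c₀ * c₁ * a 1 ^ 2 + (2 * c₀ * c₂ + c₁ ^ 2) * a 2 ^ 2 +
        2 * c₁ * c₂ * a 3 ^ 2 + c₂ ^ 2 * a 4 ^ 2) := fun l => by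
    refine (hK.dotProduct_mulVec_nonneg fun p : Fin 3 × Fin 3 =>
      (if p.1 = p.2 then ![c₀, c₁, c₂] p.1 else 0) + if p = (0, 1) then l else 0).trans_eq ?_
    simp [dotProduct, mulVec, Fintype.sum_prod_type, Fin.sum_univ_three, hankel]
    ring
  have := discrim_le_zero hquad
  rw [discrim] at this
  linarith

end IsRepMeas

theorem eq_of_cross_moment_eq_zero {A B t s : ℝ} {a : ℕ → ℝ} (hA : A ≠ 0) (hB : B ≠ 0)
    (ht : 0 < t) (hs : 0 < s) (ha : ∀ n, a n ^ 2 = A * t ^ n + B * s ^ n)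
    (hE : t * s * (a 0 * a 1) - (t + s) * (a 1 * a 2) + a 2 * a 3 = 0) : t = s := by
  by_contra hts
  have h0 := ha 0
  have h1 := ha 1
  have h2 := ha 2
  have h3 := ha 3
  simp only [pow_zero, pow_one, mul_one] at h0 h1
  have hsq : s ^ 2 - t ^ 2 ≠ 0 := by
    rw [sq_sub_sq]
    exact mul_ne_zero (by positivity) (sub_ne_zero.mpr (Ne.symm hts))
  -- the left side of `hE` is `a₂ (a₃ - t a₁) - s a₁ (a₂ - t a₀)`; multiply by both conjugates
  have hKt : B * s * (s ^ 2 - t ^ 2) * (a 2 ^ 2 - a 1 * a 3 + t * (a 0 * a 2 - a 1 ^ 2)) = 0 := by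
    linear_combination (a 3 + t * a 1) * (a 2 + t * a 0) * hE
      - a 2 * (a 2 + t * a 0) * (h3 - t ^ 2 * h1) + s * a 1 * (a 3 + t * a 1) * (h2 - t ^ 2 * h0)
  have hKs : A * t * (s ^ 2 - t ^ 2) * (a 2 ^ 2 - a 1 * a 3 + s * (a 0 * a 2 - a 1 ^ 2)) = 0 := by
    linear_combination -(a 3 + s * a 1) * (a 2 + s * a 0) * hE
      + a 2 * (a 2 + s * a 0) * (h3 - s ^ 2 * h1) - t * a 1 * (a 3 + s * a 1) * (h2 - s ^ 2 * h0)
  simp only [mul_eq_zero, hA, hB, ht.ne', hs.ne', hsq, false_or] at hKt hKs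
  have hlog : a 0 * a 2 = a 1 ^ 2 := by
    have : (s - t) * (a 0 * a 2 - a 1 ^ 2) = 0 := by linear_combination hKs - hKt
    simpa [sub_eq_zero, Ne.symm hts] using this
  have : A * B * (t - s) ^ 2 = 0 := by
    linear_combination (a 0 * a 2 + a 1 ^ 2) * hlog - a 2 ^ 2 * h0 - (A + B) * h2
      + (a 1 ^ 2 + A * t + B * s) * h1
  simp [hA, hB, sub_eq_zero, hts] at this

theorem isStieltjes_sqrt_mul_pow (c : ℝ) {θ : ℝ} (hθ : 0 ≤ θ) :
    IsStieltjes fun n => √(c * θ ^ n) := by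
  refine ⟨ENNReal.ofReal √c • Measure.dirac √θ, fun n => Real.sqrt_nonneg _, ?_, fun n => ?_⟩
  · simp [Measure.dirac_apply' _ measurableSet_Iio, Real.sqrt_nonneg]
  · have hpow : √θ ^ n = √(θ ^ n) := by
      rw [← Real.sqrt_sq (pow_nonneg (Real.sqrt_nonneg θ) n), ← pow_mul, mul_comm, pow_mul,
        Real.sq_sqrt hθ]
    rw [lintegral_smul_measure, lintegral_dirac, smul_eq_mul,
      ← ENNReal.ofReal_mul (Real.sqrt_nonneg _), hpow, ← Real.sqrt_mul' c (pow_nonneg hθ n)]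

theorem stmt18 (α1 α2 θ1 θ2 : ℝ)
    (hα1 : 0 < α1) (hα2 : 0 < α2) (hθ1 : 0 < θ1) (hθ2 : 0 < θ2) :
    IsStieltjes (fun n => Real.sqrt (α1 * θ1 ^ n + α2 * θ2 ^ n)) ↔ θ1 = θ2 := by
  constructor
  · rintro ⟨μ, hμ⟩
    set a : ℕ → ℝ := fun n => √(α1 * θ1 ^ n + α2 * θ2 ^ n)
    have ha : ∀ n, a n ^ 2 = α1 * θ1 ^ n + α2 * θ2 ^ n := fun n => Real.sq_sqrt (by positivity)
    have hcs := hμ.sq_cross_moment_le (θ1 * θ2) (-(θ1 + θ2)) 1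
    have hann : (θ1 * θ2) ^ 2 * a 0 ^ 2 + 2 * (θ1 * θ2) * -(θ1 + θ2) * a 1 ^ 2 +
        (2 * (θ1 * θ2) * 1 + (-(θ1 + θ2)) ^ 2) * a 2 ^ 2 + 2 * -(θ1 + θ2) * 1 * a 3 ^ 2 +
        1 ^ 2 * a 4 ^ 2 = 0 := by
      simp only [ha]
      ring
    rw [hann, mul_zero] at hcs
    have hcross := pow_eq_zero_iff two_ne_zero |>.mp (le_antisymm hcs (sq_nonneg _))
    exact eq_of_cross_moment_eq_zero hα1.ne' hα2.ne' hθ1 hθ2 ha (by linear_combination hcross)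
  · rintro rfl
    simpa only [← add_mul] using isStieltjes_sqrt_mul_pow (α1 + α2) hθ1.le
end
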